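/- arXiv:0901.1025 — 3 statements merged into one kernel-verified Lean document; each statement's English description precedes it below -/
import Mathlib

section
/- Let u : C(K) → B(X) be a bounded unital homomorphism and v : Z → B(X) a bounded linear map from a Banach space Z whose image of the unit ball is R-bounded with R-bound R(v), such that u(f) v(z) = v(z) u(f) for all f ∈ C(K), z ∈ Z. Then there is a unique bounded linear map u·v : C(K; Z) → B(X) with (u·v)(f ⊗ z) = u(f) v(z), and ‖u·v‖ ≤ ‖u‖² R(v). -/
open Finset

/-- The Rademacher average, modelled on the uniform probability space `Fin n → Bool`. -/
noncomputable def radNorm {X : Type*} [NormedAddCommGroup X] [NormedSpace ℂ X]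
    {n : ℕ} (x : Fin n → X) : ℝ :=
  Real.sqrt ((∑ s : Fin n → Bool, ‖∑ k, (if s k then (1 : ℂ) else -1) • x k‖ ^ 2) / 2 ^ n)

/-- `τ ⊆ B(X)` is `R`-bounded with bound `C`. -/
def IsRBoundedWith {X : Type*} [NormedAddCommGroup X] [NormedSpace ℂ X]
    (C : ℝ) (τ : Set (X →L[ℂ] X)) : Prop :=
  0 ≤ C ∧ ∀ (n : ℕ) (T : Fin n → X →L[ℂ] X) (x : Fin n → X), (∀ k, T k ∈ τ) →
    radNorm (fun k => T k (x k)) ≤ C * radNorm x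

/-- The elementary tensor `f ⊗ z ∈ C(K; Z)`, i.e. the function `t ↦ f(t) z`. -/
noncomputable def tensorCM {K : Type*} [TopologicalSpace K] {Z : Type*} [NormedAddCommGroup Z]
    [NormedSpace ℂ Z] (f : C(K, ℂ)) (z : Z) : C(K, Z) :=
  ⟨fun t => f t • z, (map_continuous f).smul continuous_const⟩

/-!
For a sum `F = ∑ᵢ fᵢ ⊗ zᵢ`, compare `∑ᵢ u(fᵢ) v(zᵢ)` with `∑ₘ u(Gₘ²) v(F(tₘ))`, where the `Gₘ`
have pairwise disjoint supports on which the `fᵢ` barely oscillate and `tₘ` lies in the support of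
`Gₘ`. For such a family, averaging over signs `s` gives
`∑ₘ u(Gₘ²) v(wₘ) x = 𝔼ₛ u(∑ₘ sₘ Gₘ) (∑ₘ sₘ v(wₘ) u(Gₘ) x)`, and since `‖∑ₘ sₘ Gₘ‖ ≤ 1` the
`R`-bound of `v` bounds this by `‖u‖² R(v) maxₘ ‖wₘ‖ ‖x‖`, with `‖F(tₘ)‖ ≤ ‖F‖`.

Disjointly supported functions cannot satisfy `∑ₘ Gₘ² = 1` on a connected space, so the `Gₘ` are
bumps on the cells of a grid in the real and imaginary parts of the `fᵢ`, missing thin walls.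
Averaging over `N` shifted grids whose walls are pairwise disjoint makes the uncovered part
`1 - ∑ₘ Gₘ²` of size `O(1 / N)` on average, hence negligible. This bounds `u·v` by
`‖u‖² R(v)` on the dense subspace `C(K) ⊗ Z`, and `u·v` is the continuous extension.
-/


namespace DotExtension

section Rademacher

variable {X : Type*} [NormedAddCommGroup X] [NormedSpace ℂ X] {n : ℕ}

def rademacher (s : Fin n → Bool) (k : Fin n) : ℂ := if s k then 1 else -1

lemma radNorm_eq (x : Fin n → X) :
    radNorm x = √((∑ s, ‖∑ k, rademacher s k • x k‖ ^ 2) / 2 ^ n) := rfl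

lemma norm_rademacher (s : Fin n → Bool) (k : Fin n) : ‖rademacher s k‖ = 1 := by
  unfold rademacher; split <;> simp

lemma sum_rademacher_mul_rademacher (l m : Fin n) :
    ∑ s : Fin n → Bool, rademacher s l * rademacher s m = if l = m then 2 ^ n else 0 := by
  split_ifs with hlm
  · subst hlm
    have hsq : ∀ s : Fin n → Bool, rademacher s l * rademacher s l = 1 := fun s => by
      unfold rademacher; split <;> norm_num
    simp [hsq]
  -- flipping the `l`-th sign pairs the sign patterns off with opposite products
  · refine Finset.sum_involution (fun s _ => Function.update s l (!s l)) (fun s _ => ?_)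
      (fun s _ _ h => ?_) (fun _ _ => Finset.mem_univ _) (fun s _ => ?_)
    · simp only [rademacher, Function.update_self, Function.update_of_ne (Ne.symm hlm)]
      cases s l <;> cases s m <;> norm_num
    · simpa using congrFun h l
    · simp

lemma card_signs : (Fintype.card (Fin n → Bool) : ℝ) = 2 ^ n := by
  simp

lemma radNorm_le_of_forall_norm_le (x : Fin n → X) {M : ℝ} (hM : 0 ≤ M)
    (h : ∀ s, ‖∑ k, rademacher s k • x k‖ ≤ M) : radNorm x ≤ M := by
  rw [radNorm_eq, Real.sqrt_le_left hM, div_le_iff₀ (by positivity)]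
  calc ∑ s, ‖∑ k, rademacher s k • x k‖ ^ 2 ≤ ∑ _s : Fin n → Bool, M ^ 2 :=
        Finset.sum_le_sum fun s _ => pow_le_pow_left₀ (norm_nonneg _) (h s) 2
    _ = M ^ 2 * 2 ^ n := by rw [Finset.sum_const, Finset.card_univ, nsmul_eq_mul, card_signs,
        mul_comm]

lemma sum_norm_div_le_radNorm (x : Fin n → X) :
    (∑ s, ‖∑ k, rademacher s k • x k‖) / 2 ^ n ≤ radNorm x := by
  rw [radNorm_eq]
  apply Real.le_sqrt_of_sq_le
  have hcs := sq_sum_le_card_mul_sum_sq (s := Finset.univ)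
    (f := fun s : Fin n → Bool => ‖∑ k, rademacher s k • x k‖)
  rw [Finset.card_univ, card_signs] at hcs
  rw [div_pow, div_le_div_iff₀ (by positivity) (by positivity)]
  calc (∑ s, ‖∑ k, rademacher s k • x k‖) ^ 2 * 2 ^ n
      ≤ (2 ^ n * ∑ s, ‖∑ k, rademacher s k • x k‖ ^ 2) * 2 ^ n := by gcongr
    _ = (∑ s, ‖∑ k, rademacher s k • x k‖ ^ 2) * (2 ^ n) ^ 2 := by ring

lemma radNorm_ofReal_smul (x : Fin n → X) {c : ℝ} (hc : 0 ≤ c) :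
    radNorm (fun k => (c : ℂ) • x k) = c * radNorm x := by
  have hterm : ∀ s, ‖∑ k, rademacher s k • (c : ℂ) • x k‖ ^ 2
      = c ^ 2 * ‖∑ k, rademacher s k • x k‖ ^ 2 := fun s => by
    simp_rw [smul_comm _ (c : ℂ), ← Finset.smul_sum, norm_smul, Complex.norm_real,
      Real.norm_of_nonneg hc, mul_pow]
  rw [radNorm_eq, radNorm_eq, Finset.sum_congr rfl fun s _ => hterm s, ← Finset.mul_sum,
    mul_div_assoc, Real.sqrt_mul (sq_nonneg c), Real.sqrt_sq hc]

variable {Y : Type*} [NormedAddCommGroup Y] [NormedSpace ℂ Y]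

lemma sum_rademacher_apply (A : Fin n → X →L[ℂ] Y) (y : Fin n → X) :
    ∑ s, (∑ m, rademacher s m • A m) (∑ l, rademacher s l • y l)
      = (2 ^ n : ℂ) • ∑ l, A l (y l) := by
  simp_rw [_root_.sum_apply, map_sum, smul_apply, map_smul, smul_smul]
  rw [Finset.sum_comm]
  simp_rw [Finset.sum_comm (s := Finset.univ (α := Fin n → Bool)), ← Finset.sum_smul,
    sum_rademacher_mul_rademacher, ite_smul, zero_smul, Finset.sum_ite_eq, Finset.mem_univ,
    if_true, Finset.smul_sum]

lemma norm_sum_apply_le_mul_radNorm (A : Fin n → X →L[ℂ] Y) (y : Fin n → X) {M : ℝ}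
    (hA : ∀ s, ‖∑ m, rademacher s m • A m‖ ≤ M) :
    ‖∑ l, A l (y l)‖ ≤ M * radNorm y := by
  have hM : 0 ≤ M := (norm_nonneg _).trans (hA fun _ => true)
  have h2n : ‖(2 ^ n : ℂ)‖ = 2 ^ n := by simp
  calc ‖∑ l, A l (y l)‖
      = ‖∑ s, (∑ m, rademacher s m • A m) (∑ l, rademacher s l • y l)‖ / 2 ^ n := by
        rw [sum_rademacher_apply, norm_smul, h2n, mul_div_cancel_left₀ _ (by positivity)]
    _ ≤ (∑ s, M * ‖∑ l, rademacher s l • y l‖) / 2 ^ n := by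
        gcongr
        refine (norm_sum_le _ _).trans (Finset.sum_le_sum fun s _ => ?_)
        exact ((∑ m, rademacher s m • A m).le_opNorm _).trans (by gcongr; exact hA s)
    _ ≤ M * radNorm y := by
        rw [← Finset.mul_sum, mul_div_assoc]
        exact mul_le_mul_of_nonneg_left (sum_norm_div_le_radNorm y) hM

end Rademacher

section Operators

variable {X : Type*} [NormedAddCommGroup X] [NormedSpace ℂ X]
  {Z : Type*} [NormedAddCommGroup Z] [NormedSpace ℂ Z]

lemma radNorm_apply_le_of_isRBoundedWith {v : Z →L[ℂ] (X →L[ℂ] X)} {C : ℝ}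
    (hC : IsRBoundedWith C {T : X →L[ℂ] X | ∃ z : Z, ‖z‖ ≤ 1 ∧ T = v z})
    {n : ℕ} (w : Fin n → Z) {c : ℝ} (hc : 0 ≤ c) (hw : ∀ l, ‖w l‖ ≤ c) (y : Fin n → X) :
    radNorm (fun l => v (w l) (y l)) ≤ C * (c * radNorm y) := by
  rcases hc.eq_or_lt with rfl | hc
  · have hw0 : ∀ l, w l = 0 := fun l => norm_le_zero_iff.mp (hw l)
    rw [zero_mul, mul_zero]
    exact radNorm_le_of_forall_norm_le _ le_rfl fun s => by simp [hw0]
  · have hc' : (c : ℂ) ≠ 0 := Complex.ofReal_ne_zero.mpr hc.ne'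
    have hrescale : (fun l => v (w l) (y l)) = fun l => v ((c : ℂ)⁻¹ • w l) ((c : ℂ) • y l) := by
      funext l
      rw [(v _).map_smul, v.map_smul, smul_apply, smul_smul, mul_inv_cancel₀ hc', one_smul]
    rw [hrescale, ← radNorm_ofReal_smul y hc.le]
    refine hC.2 n _ _ fun l => ⟨_, ?_, rfl⟩
    rw [norm_smul, norm_inv, Complex.norm_real, Real.norm_of_nonneg hc.le, inv_mul_le_iff₀ hc,
      mul_one]
    exact hw l

variable {K : Type*} [TopologicalSpace K] [CompactSpace K]

lemma norm_sum_mul_le_of_mul_eq_zero {ι : Type*} (S : Finset ι) (G h : ι → C(K, ℂ))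
    (hdisj : (S : Set ι).Pairwise fun l m => G l * G m = 0) (hG : ∀ m ∈ S, ‖G m‖ ≤ 1)
    {δ : ℝ} (hδ : 0 ≤ δ) (hh : ∀ m ∈ S, ∀ t, G m t ≠ 0 → ‖h m t‖ ≤ δ) :
    ‖∑ m ∈ S, G m * h m‖ ≤ δ := by
  refine (ContinuousMap.norm_le _ hδ).2 fun t => ?_
  rw [ContinuousMap.sum_apply]
  by_cases h0 : ∀ m ∈ S, G m t = 0
  · rw [Finset.sum_eq_zero fun m hm => by simp [h0 m hm], norm_zero]
    exact hδ
  · push Not at h0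
    obtain ⟨l, hlS, hl⟩ := h0
    have hvanish : ∀ m ∈ S, m ≠ l → (G m * h m) t = 0 := fun m hmS hm => by
      have := congrArg (· t) (hdisj hmS hlS hm)
      simp_all
    rw [Finset.sum_eq_single_of_mem l hlS hvanish, ContinuousMap.mul_apply, norm_mul]
    exact (mul_le_of_le_one_left (norm_nonneg _)
      (((G l).norm_coe_le_norm t).trans (hG l hlS))).trans (hh l hlS t hl)

lemma norm_sum_apply_mul_self_apply_le
    (u : C(K, ℂ) →L[ℂ] (X →L[ℂ] X)) (hu_mul : ∀ f g : C(K, ℂ), u (f * g) = u f * u g)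
    (v : Z →L[ℂ] (X →L[ℂ] X)) {C : ℝ}
    (hC : IsRBoundedWith C {T : X →L[ℂ] X | ∃ z : Z, ‖z‖ ≤ 1 ∧ T = v z})
    (hcomm : ∀ (f : C(K, ℂ)) (z : Z), u f * v z = v z * u f)
    {n : ℕ} (G : Fin n → C(K, ℂ)) (hdisj : Pairwise fun l m => G l * G m = 0)
    (hG : ∀ l, ‖G l‖ ≤ 1) (w : Fin n → Z) {c : ℝ} (hc : 0 ≤ c) (hw : ∀ l, ‖w l‖ ≤ c) (x : X) :
    ‖∑ l, u (G l * G l) (v (w l) x)‖ ≤ ‖u‖ ^ 2 * C * c * ‖x‖ := by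
  have hsigns : ∀ s, ‖∑ m, rademacher s m • u (G m)‖ ≤ ‖u‖ := fun s => by
    simp_rw [← map_smul, ← map_sum]
    refine (u.le_opNorm _).trans (mul_le_of_le_one_right (norm_nonneg u) ?_)
    have hconst : ∑ m, rademacher s m • G m
        = ∑ m, G m * ContinuousMap.const K (rademacher s m) := by
      congr 1; ext1 m; ext t; simp [mul_comm]
    rw [hconst]
    exact norm_sum_mul_le_of_mul_eq_zero _ G _ (fun l _ m _ hlm => hdisj hlm) (fun m _ => hG m)
      zero_le_one fun m _ t _ => by simp [norm_rademacher]
  have hsplit : ∀ l, u (G l * G l) (v (w l) x) = u (G l) (v (w l) (u (G l) x)) := fun l => by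
    rw [hu_mul]
    exact congrArg (u (G l)) (congrArg (· x) (hcomm (G l) (w l)))
  have hrad : radNorm (fun l => u (G l) x) ≤ ‖u‖ * ‖x‖ := by
    refine radNorm_le_of_forall_norm_le _ (by positivity) fun s => ?_
    simp_rw [← smul_apply, ← _root_.sum_apply]
    exact ((∑ m, rademacher s m • u (G m)).le_opNorm x).trans (by gcongr; exact hsigns s)
  calc ‖∑ l, u (G l * G l) (v (w l) x)‖
      = ‖∑ l, u (G l) (v (w l) (u (G l) x))‖ := by simp_rw [hsplit]
    _ ≤ ‖u‖ * radNorm (fun l => v (w l) (u (G l) x)) :=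
        norm_sum_apply_le_mul_radNorm (fun l => u (G l)) _ hsigns
    _ ≤ ‖u‖ * (C * (c * (‖u‖ * ‖x‖))) := by
        gcongr
        exact (radNorm_apply_le_of_isRBoundedWith hC w hc hw _).trans
          (mul_le_mul_of_nonneg_left (mul_le_mul_of_nonneg_left hrad hc) hC.1)
    _ = ‖u‖ ^ 2 * C * c * ‖x‖ := by ring

lemma norm_apply_sum_mul_self_le_add
    (u : C(K, ℂ) →L[ℂ] (X →L[ℂ] X)) (hu_mul : ∀ f g : C(K, ℂ), u (f * g) = u f * u g)
    (v : Z →L[ℂ] (X →L[ℂ] X)) {C : ℝ}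
    (hC : IsRBoundedWith C {T : X →L[ℂ] X | ∃ z : Z, ‖z‖ ≤ 1 ∧ T = v z})
    (hcomm : ∀ (f : C(K, ℂ)) (z : Z), u f * v z = v z * u f)
    {ι κ : Type*} [Fintype ι] (f : ι → C(K, ℂ)) (z : ι → Z)
    (S : Finset κ) (G : κ → C(K, ℂ)) (hdisj : (S : Set κ).Pairwise fun l m => G l * G m = 0)
    (hG : ∀ m ∈ S, ‖G m‖ ≤ 1) (τ : κ → K) {δ : ℝ} (hδ : 0 ≤ δ)
    (hosc : ∀ m ∈ S, ∀ t, G m t ≠ 0 → ∀ i, ‖f i t - f i (τ m)‖ ≤ δ) (x : X) :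
    ‖u (∑ m ∈ S, G m * G m) (∑ i, u (f i) (v (z i) x))‖
      ≤ ‖u‖ ^ 2 * C * ‖∑ i, tensorCM (f i) (z i)‖ * ‖x‖ + ‖u‖ * δ * ∑ i, ‖v (z i) x‖ := by
  set F := ∑ i, tensorCM (f i) (z i)
  -- freeze each `f i` at the point `τ m` of the cell `m`
  set err : ι → C(K, ℂ) := fun i => ∑ m ∈ S, G m * (G m * (f i - f i (τ m) • 1))
  have hF : ∀ t, F t = ∑ i, f i t • z i := fun t => by simp [F, tensorCM]
  have hdecomp : u (∑ m ∈ S, G m * G m) (∑ i, u (f i) (v (z i) x))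
      = ∑ i, u (err i) (v (z i) x) + ∑ m ∈ S, u (G m * G m) (v (F (τ m)) x) := by
    simp only [err, hF, mul_sub, mul_smul_comm, mul_one, map_sum, map_sub, map_smul, hu_mul,
      _root_.sum_apply, sub_apply, smul_apply, Finset.sum_sub_distrib]
    rw [Finset.sum_comm (s := S)]
    simp
  have hmain : ‖∑ m ∈ S, u (G m * G m) (v (F (τ m)) x)‖ ≤ ‖u‖ ^ 2 * C * ‖F‖ * ‖x‖ := by
    rw [← Finset.sum_coe_sort S, ← S.equivFin.symm.sum_comp]
    exact norm_sum_apply_mul_self_apply_le u hu_mul v hC hcomm _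
      (fun l m hlm => hdisj (S.equivFin.symm l).2 (S.equivFin.symm m).2
        (fun h => hlm (S.equivFin.symm.injective (Subtype.ext h))))
      (fun l => hG _ (S.equivFin.symm l).2) _ (norm_nonneg F)
      (fun l => F.norm_coe_le_norm _) x
  have herr : ∀ i, ‖err i‖ ≤ δ := fun i =>
    norm_sum_mul_le_of_mul_eq_zero S G _ hdisj hG hδ fun m hm t ht => by
      rw [ContinuousMap.mul_apply, norm_mul]
      refine (mul_le_of_le_one_left (norm_nonneg _)
        (((G m).norm_coe_le_norm t).trans (hG m hm))).trans ?_
      simpa using hosc m hm t ht i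
  have herr_apply : ∀ i, ‖u (err i) (v (z i) x)‖ ≤ ‖u‖ * δ * ‖v (z i) x‖ := fun i =>
    ((u (err i)).le_opNorm _).trans <| by
      gcongr; exact (u.le_opNorm _).trans (by gcongr; exact herr i)
  rw [hdecomp, add_comm]
  refine (norm_add_le _ _).trans (add_le_add hmain ?_)
  rw [Finset.mul_sum]
  exact (norm_sum_le _ _).trans (Finset.sum_le_sum fun i _ => herr_apply i)

lemma norm_le_of_forall_norm_apply_le (u : C(K, ℂ) →L[ℂ] (X →L[ℂ] X)) (hu_one : u 1 = 1)
    {N : ℕ} (hN : 0 < N) (g : ℕ → C(K, ℂ)) (y : X) {A : ℝ}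
    (hA : ∀ r < N, ‖u (g r) y‖ ≤ A) :
    ‖y‖ ≤ A + ‖u‖ * (‖∑ r ∈ Finset.range N, (1 - g r)‖ / N) * ‖y‖ := by
  have hNR : (0 : ℝ) < N := Nat.cast_pos.mpr hN
  have hsplit : (N : ℂ) • y = ∑ r ∈ Finset.range N, u (g r) y
      + u (∑ r ∈ Finset.range N, (1 - g r)) y := by
    simp only [Finset.sum_sub_distrib, Finset.sum_const, Finset.card_range, map_sub, map_nsmul,
      map_sum, hu_one, sub_apply, _root_.sum_apply]
    simp [← Nat.cast_smul_eq_nsmul ℂ]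
  have hbound : N * ‖y‖ ≤ N * A + ‖u‖ * ‖∑ r ∈ Finset.range N, (1 - g r)‖ * ‖y‖ := by
    calc N * ‖y‖ = ‖(N : ℂ) • y‖ := by rw [norm_smul, Complex.norm_natCast]
      _ ≤ ‖∑ r ∈ Finset.range N, u (g r) y‖ + ‖u (∑ r ∈ Finset.range N, (1 - g r)) y‖ := by
          rw [hsplit]; exact norm_add_le _ _
      _ ≤ ∑ _r ∈ Finset.range N, A + ‖u‖ * ‖∑ r ∈ Finset.range N, (1 - g r)‖ * ‖y‖ := by
          gcongr
          · exact (norm_sum_le _ _).trans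
              (Finset.sum_le_sum fun r hr => hA r (Finset.mem_range.mp hr))
          · exact ((u _).le_opNorm y).trans (by gcongr; exact u.le_opNorm _)
      _ = N * A + ‖u‖ * ‖∑ r ∈ Finset.range N, (1 - g r)‖ * ‖y‖ := by simp
  rw [mul_div_assoc', div_mul_eq_mul_div, ← sub_le_iff_le_add', le_div_iff₀ hNR]
  linarith

end Operators

lemma sum_le_of_pairwise_eq_zero {ι : Type*} (s : Finset ι) (a : ι → ℝ) {c : ℝ} (hc : 0 ≤ c)
    (ha : ∀ i ∈ s, a i ≤ c) (hdisj : (s : Set ι).Pairwise fun i j => a i = 0 ∨ a j = 0) :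
    ∑ i ∈ s, a i ≤ c := by
  by_cases h0 : ∀ i ∈ s, a i = 0
  · rwa [Finset.sum_eq_zero h0]
  · push Not at h0
    obtain ⟨i, his, hi⟩ := h0
    rw [Finset.sum_eq_single_of_mem i his fun j hjs hji => (hdisj hjs his hji).resolve_right hi]
    exact ha i his

lemma one_sub_prod_le_sum_one_sub {ι : Type*} (s : Finset ι) (q : ι → ℝ)
    (h0 : ∀ i ∈ s, 0 ≤ q i) (h1 : ∀ i ∈ s, q i ≤ 1) :
    1 - ∏ i ∈ s, q i ≤ ∑ i ∈ s, (1 - q i) := by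
  induction s using Finset.cons_induction with
  | empty => simp
  | cons j s hj ih =>
    simp only [Finset.mem_cons, forall_eq_or_imp] at h0 h1
    rw [Finset.prod_cons, Finset.sum_cons]
    have hprod : 0 ≤ ∏ i ∈ s, q i := Finset.prod_nonneg h0.2
    have hprod' : ∏ i ∈ s, q i ≤ 1 := Finset.prod_le_one h0.2 h1.2
    nlinarith [ih h0.2 h1.2]

section Cells

def trapezoid (l r ξ : ℝ) : ℝ := max 0 (min 1 (8 * min (ξ - l) (r - ξ) - 1))

lemma continuous_trapezoid (l r : ℝ) : Continuous (trapezoid l r) := by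
  unfold trapezoid; fun_prop

lemma trapezoid_nonneg (l r ξ : ℝ) : 0 ≤ trapezoid l r ξ := le_max_left _ _

lemma trapezoid_le_one (l r ξ : ℝ) : trapezoid l r ξ ≤ 1 :=
  max_le zero_le_one (min_le_left _ _)

lemma mem_Ioo_of_trapezoid_ne_zero {l r ξ : ℝ} (h : trapezoid l r ξ ≠ 0) :
    l + 1 / 8 < ξ ∧ ξ < r - 1 / 8 := by
  have hpos : 0 < 8 * min (ξ - l) (r - ξ) - 1 := by
    by_contra hle
    exact h (max_eq_left (min_le_of_right_le (not_lt.mp hle)))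
  constructor <;> linarith [min_le_left (ξ - l) (r - ξ), min_le_right (ξ - l) (r - ξ)]

lemma trapezoid_eq_one {l r ξ : ℝ} (hl : l + 1 / 4 ≤ ξ) (hr : ξ ≤ r - 1 / 4) :
    trapezoid l r ξ = 1 := by
  have := le_min (by linarith : 1 / 4 ≤ ξ - l) (by linarith : 1 / 4 ≤ r - ξ)
  rw [trapezoid, min_eq_left (by linarith), max_eq_right zero_le_one]

def cellBump (N r : ℕ) (j : ℤ) : ℝ → ℝ := trapezoid (N * j + r) (N * j + r + N)

lemma cellBump_nonneg (N r : ℕ) (j : ℤ) (ξ : ℝ) : 0 ≤ cellBump N r j ξ :=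
  trapezoid_nonneg _ _ _

lemma cellBump_le_one (N r : ℕ) (j : ℤ) (ξ : ℝ) : cellBump N r j ξ ≤ 1 :=
  trapezoid_le_one _ _ _

variable {N r : ℕ}

lemma eq_of_cellBump_ne_zero (hN : 0 < N) {j j' : ℤ} {ξ : ℝ} (hj : cellBump N r j ξ ≠ 0)
    (hj' : cellBump N r j' ξ ≠ 0) : j = j' := by
  obtain ⟨h₁, h₂⟩ := mem_Ioo_of_trapezoid_ne_zero hj
  obtain ⟨h₁', h₂'⟩ := mem_Ioo_of_trapezoid_ne_zero hj'
  have hNR : (0 : ℝ) < N := Nat.cast_pos.mpr hN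
  have hle : ∀ a b : ℤ, (N : ℝ) * a < N * b + N → a ≤ b := fun a b h => by
    have : (a : ℝ) < b + 1 := by
      rw [← mul_lt_mul_iff_right₀ hNR]; linarith
    exact_mod_cast Int.lt_add_one_iff.mp (by exact_mod_cast this)
  exact le_antisymm (hle j j' (by linarith)) (hle j' j (by linarith))

noncomputable def cellSqSum (N r B : ℕ) (ξ : ℝ) : ℝ :=
  ∑ j ∈ Finset.Icc (-(B : ℤ) - 1) B, cellBump N r j ξ ^ 2

lemma cellSqSum_nonneg (N r B : ℕ) (ξ : ℝ) : 0 ≤ cellSqSum N r B ξ :=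
  Finset.sum_nonneg fun _ _ => sq_nonneg _

lemma cellSqSum_le_one (hN : 0 < N) (B : ℕ) (ξ : ℝ) : cellSqSum N r B ξ ≤ 1 := by
  refine sum_le_of_pairwise_eq_zero _ _ zero_le_one
    (fun j _ => pow_le_one₀ (cellBump_nonneg _ _ _ _) (cellBump_le_one _ _ _ _)) ?_
  intro j _ j' _ hjj'
  by_contra! h
  exact hjj' (eq_of_cellBump_ne_zero hN (pow_ne_zero_iff two_ne_zero |>.mp h.1)
    (pow_ne_zero_iff two_ne_zero |>.mp h.2))

lemma exists_mem_Icc_cell (hN : 0 < N) (hr : r < N) {B : ℕ} {ξ : ℝ} (hξ : |ξ| ≤ B) :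
    ∃ j ∈ Finset.Icc (-(B : ℤ) - 1) B, (N : ℝ) * j + r ≤ ξ ∧ ξ < N * j + r + N := by
  have hNR : (1 : ℝ) ≤ N := Nat.one_le_cast.mpr hN
  have hrN : (r : ℝ) < N := Nat.cast_lt.mpr hr
  obtain ⟨hξ₁, hξ₂⟩ := abs_le.mp hξ
  set j := ⌊(ξ - r) / N⌋
  have hj₁ : (N : ℝ) * j + r ≤ ξ := by
    have := Int.floor_le ((ξ - r) / N)
    rw [le_div_iff₀ (by positivity)] at this
    linarith
  have hj₂ : ξ < N * j + r + N := by
    have := Int.lt_floor_add_one ((ξ - r) / N)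
    rw [div_lt_iff₀ (by positivity)] at this
    linarith
  refine ⟨j, Finset.mem_Icc.2 ⟨?_, ?_⟩, hj₁, hj₂⟩
  · by_contra h
    have : (j : ℝ) ≤ -B - 2 := by exact_mod_cast (by omega : j ≤ -(B : ℤ) - 2)
    nlinarith
  · by_contra h
    have : (B : ℝ) + 1 ≤ j := by exact_mod_cast (by omega : (B : ℤ) + 1 ≤ j)
    nlinarith

lemma cellSqSum_eq_one_or_near_wall (hN : 0 < N) (hr : r < N) {B : ℕ} {ξ : ℝ}
    (hξ : |ξ| ≤ B) : cellSqSum N r B ξ = 1 ∨ ∃ k : ℤ, k % N = r ∧ |ξ - k| < 1 / 4 := by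
  obtain ⟨j, hjmem, hj₁, hj₂⟩ := exists_mem_Icc_cell hN hr hξ
  have hwall : ∀ i : ℤ, ((N : ℤ) * i + r) % N = r := fun i => by
    rw [add_comm, Int.add_mul_emod_self_left]
    exact Int.emod_eq_of_lt (by omega) (by omega)
  by_cases hlo : ξ < N * j + r + 1 / 4
  · exact Or.inr ⟨N * j + r, hwall j, by rw [abs_lt]; push_cast; constructor <;> linarith⟩
  by_cases hhi : N * j + r + N - 1 / 4 < ξ
  · refine Or.inr ⟨N * (j + 1) + r, hwall _, ?_⟩
    rw [abs_lt]; push_cast; constructor <;> linarith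
  have hone : cellBump N r j ξ = 1 := trapezoid_eq_one (by linarith) (by linarith)
  left
  rw [cellSqSum, Finset.sum_eq_single_of_mem j hjmem fun j' _ hj' => ?_, hone, one_pow]
  by_contra h
  exact hj' (eq_of_cellBump_ne_zero hN (pow_ne_zero_iff two_ne_zero |>.mp h) (by simp [hone]))

lemma cellSqSum_eq_one_or_eq_one (hN : 0 < N) {r r' : ℕ} (hr : r < N) (hr' : r' < N)
    (hrr' : r ≠ r') {B : ℕ} {ξ : ℝ} (hξ : |ξ| ≤ B) :
    cellSqSum N r B ξ = 1 ∨ cellSqSum N r' B ξ = 1 := by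
  rcases cellSqSum_eq_one_or_near_wall hN hr hξ with h | ⟨k, hk, hkξ⟩
  · exact Or.inl h
  rcases cellSqSum_eq_one_or_near_wall hN hr' hξ with h' | ⟨k', hk', hk'ξ⟩
  · exact Or.inr h'
  have hkk' : k = k' := by
    have : |(k : ℝ) - k'| < 1 := by
      calc |(k : ℝ) - k'| ≤ |(k : ℝ) - ξ| + |ξ - k'| := abs_sub_le _ _ _
        _ < 1 := by rw [abs_sub_comm]; linarith
    exact sub_eq_zero.mp (Int.abs_lt_one_iff.mp (by exact_mod_cast this))
  subst hkk'
  exact absurd (hk.symm.trans hk') (by exact_mod_cast hrr')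

lemma sum_one_sub_cellSqSum_le_one (hN : 0 < N) {B : ℕ} {ξ : ℝ} (hξ : |ξ| ≤ B) :
    ∑ r ∈ Finset.range N, (1 - cellSqSum N r B ξ) ≤ 1 := by
  refine sum_le_of_pairwise_eq_zero _ _ zero_le_one
    (fun r _ => by linarith [cellSqSum_nonneg N r B ξ]) fun r hr r' hr' hrr' => ?_
  rcases cellSqSum_eq_one_or_eq_one hN (Finset.mem_range.mp hr) (Finset.mem_range.mp hr') hrr'
    hξ with h | h <;> simp [h]

end Cells

section CellFunctions

variable {K : Type*} [TopologicalSpace K] {D : Type*} [Fintype D] {N r : ℕ}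

noncomputable def cellFun (co : D → C(K, ℝ)) (N r : ℕ) (m : D → ℤ) : C(K, ℂ) :=
  ⟨fun t => ((∏ d, cellBump N r (m d) (co d t) : ℝ) : ℂ),
    Complex.continuous_ofReal.comp <| continuous_finsetProd _ fun d _ =>
      (continuous_trapezoid _ _).comp (co d).continuous⟩

lemma cellFun_apply (co : D → C(K, ℝ)) (N r : ℕ) (m : D → ℤ) (t : K) :
    cellFun co N r m t = ((∏ d, cellBump N r (m d) (co d t) : ℝ) : ℂ) := rfl

lemma cellBump_ne_zero_of_cellFun_ne_zero {co : D → C(K, ℝ)} {m : D → ℤ} {t : K}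
    (h : cellFun co N r m t ≠ 0) (d : D) : cellBump N r (m d) (co d t) ≠ 0 := fun h0 => by
  rw [cellFun_apply, Finset.prod_eq_zero (Finset.mem_univ d) h0, Complex.ofReal_zero] at h
  exact h rfl

lemma cellFun_mul_cellFun_eq_zero (hN : 0 < N) (co : D → C(K, ℝ)) {m m' : D → ℤ}
    (hmm' : m ≠ m') : cellFun co N r m * cellFun co N r m' = 0 := by
  ext t
  rw [ContinuousMap.mul_apply, ContinuousMap.zero_apply, mul_eq_zero]
  by_contra! h
  exact hmm' (funext fun d => eq_of_cellBump_ne_zero hN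
    (cellBump_ne_zero_of_cellFun_ne_zero h.1 d) (cellBump_ne_zero_of_cellFun_ne_zero h.2 d))

lemma abs_sub_lt_of_cellFun_ne_zero {co : D → C(K, ℝ)} {m : D → ℤ} {t t' : K}
    (h : cellFun co N r m t ≠ 0) (h' : cellFun co N r m t' ≠ 0) (d : D) :
    |co d t - co d t'| < N := by
  obtain ⟨h₁, h₂⟩ := mem_Ioo_of_trapezoid_ne_zero (cellBump_ne_zero_of_cellFun_ne_zero h d)
  obtain ⟨h₁', h₂'⟩ := mem_Ioo_of_trapezoid_ne_zero (cellBump_ne_zero_of_cellFun_ne_zero h' d)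
  rw [abs_lt]
  constructor <;> linarith

lemma norm_cellFun_le_one [CompactSpace K] (co : D → C(K, ℝ)) (N r : ℕ) (m : D → ℤ) :
    ‖cellFun co N r m‖ ≤ 1 := by
  refine (ContinuousMap.norm_le _ zero_le_one).2 fun t => ?_
  rw [cellFun_apply, Complex.norm_real,
    Real.norm_of_nonneg (Finset.prod_nonneg fun _ _ => cellBump_nonneg _ _ _ _)]
  exact Finset.prod_le_one (fun _ _ => cellBump_nonneg _ _ _ _) fun _ _ => cellBump_le_one _ _ _ _

variable [DecidableEq D]

noncomputable def cells (D : Type*) [Fintype D] [DecidableEq D] (B : ℕ) : Finset (D → ℤ) :=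
  Fintype.piFinset fun _ => Finset.Icc (-(B : ℤ) - 1) B

lemma sum_cellFun_mul_self_apply (co : D → C(K, ℝ)) (N r B : ℕ) (t : K) :
    (∑ m ∈ cells D B, cellFun co N r m * cellFun co N r m) t
      = ((∏ d, cellSqSum N r B (co d t) : ℝ) : ℂ) := by
  have hsq : ∀ m, (cellFun co N r m * cellFun co N r m) t
      = ((∏ d, cellBump N r (m d) (co d t) ^ 2 : ℝ) : ℂ) := fun m => by
    simp only [ContinuousMap.mul_apply, cellFun_apply, ← Complex.ofReal_mul,
      ← Finset.prod_mul_distrib, sq]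
  rw [ContinuousMap.sum_apply, Finset.sum_congr rfl fun m _ => hsq m, ← Complex.ofReal_sum]
  exact congrArg _ (Finset.sum_prod_piFinset _ fun d j => cellBump N r j (co d t) ^ 2)

lemma norm_sum_range_one_sub_le [CompactSpace K] (hN : 0 < N) (co : D → C(K, ℝ)) {B : ℕ}
    (hco : ∀ d t, |co d t| ≤ B) :
    ‖∑ r ∈ Finset.range N, (1 - ∑ m ∈ cells D B, cellFun co N r m * cellFun co N r m)‖
      ≤ Fintype.card D := by
  refine (ContinuousMap.norm_le _ (Nat.cast_nonneg _)).2 fun t => ?_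
  set q : ℕ → D → ℝ := fun r d => cellSqSum N r B (co d t)
  have hq0 : ∀ r d, 0 ≤ q r d := fun r d => cellSqSum_nonneg _ _ _ _
  have hq1 : ∀ r d, q r d ≤ 1 := fun r d => cellSqSum_le_one hN _ _
  have happly : (∑ r ∈ Finset.range N,
      (1 - ∑ m ∈ cells D B, cellFun co N r m * cellFun co N r m)) t
      = ((∑ r ∈ Finset.range N, (1 - ∏ d, q r d) : ℝ) : ℂ) := by
    rw [ContinuousMap.sum_apply]
    simp only [ContinuousMap.sub_apply, ContinuousMap.one_apply, sum_cellFun_mul_self_apply, q]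
    push_cast
    rfl
  rw [happly, Complex.norm_real, Real.norm_of_nonneg (Finset.sum_nonneg fun r _ =>
    sub_nonneg.mpr (Finset.prod_le_one (fun d _ => hq0 r d) fun d _ => hq1 r d))]
  calc ∑ r ∈ Finset.range N, (1 - ∏ d, q r d)
      ≤ ∑ r ∈ Finset.range N, ∑ d, (1 - q r d) := Finset.sum_le_sum fun r _ =>
        one_sub_prod_le_sum_one_sub _ _ (fun d _ => hq0 r d) fun d _ => hq1 r d
    _ = ∑ d, ∑ r ∈ Finset.range N, (1 - q r d) := Finset.sum_comm
    _ ≤ ∑ _d : D, (1 : ℝ) := Finset.sum_le_sum fun d _ => sum_one_sub_cellSqSum_le_one hN (hco d t)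
    _ = Fintype.card D := by simp

end CellFunctions

section KeyEstimate

variable {K : Type*} [TopologicalSpace K]
  {X : Type*} [NormedAddCommGroup X] [NormedSpace ℂ X]
  {Z : Type*} [NormedAddCommGroup Z] [NormedSpace ℂ Z] {ι : Type*}

/-- Cells of width `N` in these coordinates have width `1 / N` in `ℂ`. -/
noncomputable def scaledReIm (f : ι → C(K, ℂ)) (N : ℕ) : ι ⊕ ι → C(K, ℝ) :=
  Sum.elim (fun i => (N ^ 2 : ℝ) • (⟨Complex.re, Complex.continuous_re⟩ : C(ℂ, ℝ)).comp (f i))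
    (fun i => (N ^ 2 : ℝ) • (⟨Complex.im, Complex.continuous_im⟩ : C(ℂ, ℝ)).comp (f i))

lemma abs_scaledReIm_le [CompactSpace K] [Fintype ι] (f : ι → C(K, ℂ)) (N : ℕ) (d : ι ⊕ ι)
    (t : K) :
    |scaledReIm f N d t| ≤ ⌈(N : ℝ) ^ 2 * ∑ i, ‖f i‖⌉₊ := by
  have hf : ∀ i, (N : ℝ) ^ 2 * ‖f i t‖ ≤ ⌈(N : ℝ) ^ 2 * ∑ i, ‖f i‖⌉₊ := fun i =>
    (mul_le_mul_of_nonneg_left (((f i).norm_coe_le_norm t).trans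
      (Finset.single_le_sum (fun j _ => norm_nonneg (f j)) (Finset.mem_univ i)))
      (by positivity)).trans (Nat.le_ceil _)
  rcases d with i | i <;> simp only [scaledReIm, Sum.elim_inl, Sum.elim_inr,
    ContinuousMap.smul_apply, ContinuousMap.comp_apply, ContinuousMap.coe_mk, smul_eq_mul,
    abs_mul, abs_of_nonneg (by positivity : (0 : ℝ) ≤ N ^ 2)]
  · exact (mul_le_mul_of_nonneg_left (Complex.abs_re_le_norm _) (by positivity)).trans (hf i)
  · exact (mul_le_mul_of_nonneg_left (Complex.abs_im_le_norm _) (by positivity)).trans (hf i)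

lemma norm_sub_le_of_cellFun_scaledReIm_ne_zero [Fintype ι] {f : ι → C(K, ℂ)} {N r : ℕ}
    (hN : 0 < N) {m : ι ⊕ ι → ℤ} {t t' : K} (h : cellFun (scaledReIm f N) N r m t ≠ 0)
    (h' : cellFun (scaledReIm f N) N r m t' ≠ 0) (i : ι) : ‖f i t - f i t'‖ ≤ 2 / N := by
  have hNR : (0 : ℝ) < N := Nat.cast_pos.mpr hN
  have hscale : ∀ a b : ℝ, |(N : ℝ) ^ 2 * a - N ^ 2 * b| < N → |a - b| ≤ 1 / N := fun a b h => by
    rw [← mul_sub, abs_mul, abs_of_pos (by positivity)] at h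
    rw [le_div_iff₀ hNR]
    nlinarith [abs_nonneg (a - b)]
  calc ‖f i t - f i t'‖ ≤ |(f i t - f i t').re| + |(f i t - f i t').im| :=
        Complex.norm_le_abs_re_add_abs_im _
    _ ≤ 1 / N + 1 / N := by
        rw [Complex.sub_re, Complex.sub_im]
        exact add_le_add (hscale _ _ (abs_sub_lt_of_cellFun_ne_zero h h' (Sum.inl i)))
          (hscale _ _ (abs_sub_lt_of_cellFun_ne_zero h h' (Sum.inr i)))
    _ = 2 / N := by ring

variable [CompactSpace K] (u : C(K, ℂ) →L[ℂ] (X →L[ℂ] X)) (hu_one : u 1 = 1)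
  (hu_mul : ∀ f g : C(K, ℂ), u (f * g) = u f * u g)
  (v : Z →L[ℂ] (X →L[ℂ] X)) {C : ℝ}
  (hC : IsRBoundedWith C {T : X →L[ℂ] X | ∃ z : Z, ‖z‖ ≤ 1 ∧ T = v z})
  (hcomm : ∀ (f : C(K, ℂ)) (z : Z), u f * v z = v z * u f)
include hu_one hu_mul hC hcomm

-- The error terms come from the oscillation of the `f i` on the cells and from the walls.
lemma norm_sum_apply_le_add_div [Nonempty K] [Fintype ι] (f : ι → C(K, ℂ)) (z : ι → Z) (x : X)
    {N : ℕ} (hN : 0 < N) :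
    ‖∑ i, u (f i) (v (z i) x)‖ ≤ ‖u‖ ^ 2 * C * ‖∑ i, tensorCM (f i) (z i)‖ * ‖x‖
      + ‖u‖ * (2 / N) * ∑ i, ‖v (z i) x‖
      + ‖u‖ * (2 * Fintype.card ι / N) * ‖∑ i, u (f i) (v (z i) x)‖ := by
  classical
  set G := cellFun (scaledReIm f N) N
  set τ : ℕ → (ι ⊕ ι → ℤ) → K := fun r m =>
    if h : ∃ t, G r m t ≠ 0 then h.choose else Classical.arbitrary K
  have hτ : ∀ r m t, G r m t ≠ 0 → G r m (τ r m) ≠ 0 := fun r m t ht => by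
    have h : ∃ t, G r m t ≠ 0 := ⟨t, ht⟩
    simpa only [τ, dif_pos h] using h.choose_spec
  set B := ⌈(N : ℝ) ^ 2 * ∑ i, ‖f i‖⌉₊
  have hsystem : ∀ r < N, ‖u (∑ m ∈ cells _ B, G r m * G r m) (∑ i, u (f i) (v (z i) x))‖
      ≤ ‖u‖ ^ 2 * C * ‖∑ i, tensorCM (f i) (z i)‖ * ‖x‖ + ‖u‖ * (2 / N) * ∑ i, ‖v (z i) x‖ :=
    fun r _ => (norm_apply_sum_mul_self_le_add u hu_mul v hC hcomm f z _ (G r)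
      (fun _ _ _ _ h => cellFun_mul_cellFun_eq_zero hN _ h) (fun m _ => norm_cellFun_le_one _ N r m)
      (τ r) (by positivity) fun m _ t ht =>
        norm_sub_le_of_cellFun_scaledReIm_ne_zero hN ht (hτ r m t ht)) x
  have hwalls := norm_sum_range_one_sub_le hN _ (abs_scaledReIm_le f N)
  rw [Fintype.card_sum, Nat.cast_add, ← two_mul] at hwalls
  refine (norm_le_of_forall_norm_apply_le u hu_one hN _ _ hsystem).trans ?_
  gcongr

theorem norm_sum_comp_le [Fintype ι] (f : ι → C(K, ℂ)) (z : ι → Z) :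
    ‖∑ i, u (f i) ∘L v (z i)‖ ≤ ‖u‖ ^ 2 * C * ‖∑ i, tensorCM (f i) (z i)‖ := by
  have hC0 := hC.1
  refine ContinuousLinearMap.opNorm_le_bound _ (by positivity) fun x => ?_
  simp only [_root_.sum_apply, ContinuousLinearMap.comp_apply]
  rcases isEmpty_or_nonempty K with hK | hK
  · have hf : ∀ i, f i = 0 := fun i => ContinuousMap.ext isEmptyElim
    simp only [hf, map_zero, zero_apply, Finset.sum_const_zero, norm_zero]
    positivity
  set Tx := ∑ i, u (f i) (v (z i) x)
  set c := ‖u‖ * 2 * ∑ i, ‖v (z i) x‖ + ‖u‖ * (2 * Fintype.card ι) * ‖Tx‖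
  refine le_of_forall_pos_le_add fun ε hε => ?_
  obtain ⟨N, hN⟩ := exists_nat_gt (c / ε)
  have hN0 : 0 < N := Nat.cast_pos.mp ((div_nonneg (by positivity) hε.le).trans_lt hN)
  have hcN : c / N ≤ ε := by
    rw [div_lt_iff₀ hε] at hN
    rw [div_le_iff₀ (Nat.cast_pos.mpr hN0)]
    linarith
  calc ‖Tx‖ ≤ ‖u‖ ^ 2 * C * ‖∑ i, tensorCM (f i) (z i)‖ * ‖x‖
        + ‖u‖ * (2 / N) * ∑ i, ‖v (z i) x‖ + ‖u‖ * (2 * Fintype.card ι / N) * ‖Tx‖ :=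
        norm_sum_apply_le_add_div u hu_one hu_mul v hC hcomm f z x hN0
    _ = ‖u‖ ^ 2 * C * ‖∑ i, tensorCM (f i) (z i)‖ * ‖x‖ + c / N := by ring
    _ ≤ ‖u‖ ^ 2 * C * ‖∑ i, tensorCM (f i) (z i)‖ * ‖x‖ + ε := by linarith

end KeyEstimate

section Extension

open scoped TensorProduct

variable {K : Type*} [TopologicalSpace K] {Z : Type*} [NormedAddCommGroup Z] [NormedSpace ℂ Z]

noncomputable def tensorToCM : C(K, ℂ) ⊗[ℂ] Z →ₗ[ℂ] C(K, Z) :=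
  TensorProduct.lift <| LinearMap.mk₂ ℂ tensorCM
    (fun _ _ _ => by ext; simp [tensorCM, add_smul])
    (fun _ _ _ => by ext; simp [tensorCM, smul_smul])
    (fun _ _ _ => by ext; simp [tensorCM])
    (fun _ f _ => by ext t; exact smul_comm (f t) _ _)

@[simp]
lemma tensorToCM_tmul (f : C(K, ℂ)) (z : Z) : tensorToCM (f ⊗ₜ[ℂ] z) = tensorCM f z := rfl

/-- `F` is approximated by `∑ₜ ρₜ(F) ⊗ F(t)` for a partition of unity `ρ` on `Z` subordinate to
balls around finitely many values `F(t)`. -/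
lemma denseRange_tensorToCM [CompactSpace K] :
    DenseRange (tensorToCM : C(K, ℂ) ⊗[ℂ] Z → C(K, Z)) := by
  refine Metric.denseRange_iff.2 fun F ε hε => ?_
  have hF : IsCompact (Set.range F) := isCompact_range F.continuous
  obtain ⟨s, hs⟩ := hF.elim_finite_subcover (fun t : K => Metric.ball (F t) (ε / 2))
    (fun _ => Metric.isOpen_ball) fun _ ⟨t, ht⟩ =>
      Set.mem_iUnion.2 ⟨t, ht ▸ Metric.mem_ball_self (half_pos hε)⟩
  obtain ⟨ρ, hρ⟩ := PartitionOfUnity.exists_isSubordinate hF.isClosed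
    (fun t : s => Metric.ball (F t) (ε / 2)) (fun _ => Metric.isOpen_ball)
    (hs.trans (by simp [Set.iUnion_subtype]))
  let ofRealCM : C(ℝ, ℂ) := ⟨Complex.ofReal, Complex.continuous_ofReal⟩
  refine ⟨∑ t : s, ofRealCM.comp ((ρ t).comp F) ⊗ₜ[ℂ] F t, ?_⟩
  have hpoint : ∀ k, ‖F k - ∑ t : s, (ρ t (F k) : ℂ) • F t‖ ≤ ε / 2 := fun k => by
    have hsum : ∑ t : s, ρ t (F k) = 1 := by
      rw [← finsum_eq_sum_of_fintype]; exact ρ.sum_eq_one ⟨k, rfl⟩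
    have hdiff : F k - ∑ t : s, (ρ t (F k) : ℂ) • F t = ∑ t : s, (ρ t (F k) : ℂ) • (F k - F t) := by
      simp only [smul_sub, Finset.sum_sub_distrib, ← Finset.sum_smul, ← Complex.ofReal_sum, hsum,
        Complex.ofReal_one, one_smul]
    rw [hdiff]
    refine (norm_sum_le _ _).trans ?_
    calc ∑ t : s, ‖(ρ t (F k) : ℂ) • (F k - F t)‖ ≤ ∑ t : s, ρ t (F k) * (ε / 2) := by
          refine Finset.sum_le_sum fun t _ => ?_
          rw [norm_smul, Complex.norm_real, Real.norm_of_nonneg (ρ.nonneg t _)]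
          by_cases h0 : ρ t (F k) = 0
          · simp [h0]
          · refine mul_le_mul_of_nonneg_left ?_ (ρ.nonneg t _)
            have := hρ t (subset_tsupport _ h0)
            rw [Metric.mem_ball, dist_eq_norm] at this
            exact this.le
      _ = ε / 2 := by rw [← Finset.sum_mul, hsum, one_mul]
  rw [dist_eq_norm]
  refine lt_of_le_of_lt ((ContinuousMap.norm_le _ (half_pos hε).le).2 fun k => ?_) (half_lt_self hε)
  simpa [map_sum, tensorCM, ofRealCM] using hpoint k

variable {X : Type*} [NormedAddCommGroup X] [NormedSpace ℂ X]

noncomputable def dotTensor (u : C(K, ℂ) →L[ℂ] (X →L[ℂ] X)) (v : Z →L[ℂ] (X →L[ℂ] X)) :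
    C(K, ℂ) ⊗[ℂ] Z →ₗ[ℂ] (X →L[ℂ] X) :=
  TensorProduct.lift <| LinearMap.mk₂ ℂ (fun f z => u f ∘L v z)
    (fun _ _ _ => by simp [ContinuousLinearMap.add_comp])
    (fun _ _ _ => by simp)
    (fun _ _ _ => by simp [ContinuousLinearMap.comp_add])
    (fun _ _ _ => by simp)

@[simp]
lemma dotTensor_tmul (u : C(K, ℂ) →L[ℂ] (X →L[ℂ] X)) (v : Z →L[ℂ] (X →L[ℂ] X)) (f : C(K, ℂ))
    (z : Z) : dotTensor u v (f ⊗ₜ[ℂ] z) = u f ∘L v z := rfl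

lemma norm_dotTensor_le [CompactSpace K]
    (u : C(K, ℂ) →L[ℂ] (X →L[ℂ] X)) (hu_one : u 1 = 1)
    (hu_mul : ∀ f g : C(K, ℂ), u (f * g) = u f * u g)
    (v : Z →L[ℂ] (X →L[ℂ] X)) {C : ℝ}
    (hC : IsRBoundedWith C {T : X →L[ℂ] X | ∃ z : Z, ‖z‖ ≤ 1 ∧ T = v z})
    (hcomm : ∀ (f : C(K, ℂ)) (z : Z), u f * v z = v z * u f) (t : C(K, ℂ) ⊗[ℂ] Z) :
    ‖dotTensor u v t‖ ≤ ‖u‖ ^ 2 * C * ‖tensorToCM t‖ := by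
  obtain ⟨S, rfl⟩ := TensorProduct.exists_finset t
  simp only [map_sum, dotTensor_tmul, tensorToCM_tmul]
  rw [← Finset.sum_coe_sort S, ← Finset.sum_coe_sort S]
  exact norm_sum_comp_le u hu_one hu_mul v hC hcomm (fun q : S => q.1.1) fun q => q.1.2

end Extension

end DotExtension

open DotExtension

/-- Let `u : C(K) → B(X)` be a bounded unital homomorphism and `v : Z → B(X)` a bounded
linear map whose image of the unit ball is `R`-bounded with bound `C`, commuting with `u`.
Then there is a unique bounded linear map `u·v : C(K; Z) → B(X)` with
`(u·v)(f ⊗ z) = u(f) v(z)`, and `‖u·v‖ ≤ ‖u‖² C`. -/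
theorem exists_unique_dot_extension {K : Type*} [TopologicalSpace K] [CompactSpace K]
    {X : Type*} [NormedAddCommGroup X] [NormedSpace ℂ X] [CompleteSpace X]
    {Z : Type*} [NormedAddCommGroup Z] [NormedSpace ℂ Z]
    (u : C(K, ℂ) →L[ℂ] (X →L[ℂ] X))
    (hu_one : u 1 = 1) (hu_mul : ∀ f g : C(K, ℂ), u (f * g) = u f * u g)
    (v : Z →L[ℂ] (X →L[ℂ] X)) (C : ℝ)
    (hC : IsRBoundedWith C {T : X →L[ℂ] X | ∃ z : Z, ‖z‖ ≤ 1 ∧ T = v z})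
    (hcomm : ∀ (f : C(K, ℂ)) (z : Z), u f * v z = v z * u f) :
    ∃ w : C(K, Z) →L[ℂ] (X →L[ℂ] X),
      (∀ (f : C(K, ℂ)) (z : Z), w (tensorCM f z) = u f ∘L v z) ∧
      ‖w‖ ≤ ‖u‖ ^ 2 * C ∧
      ∀ w' : C(K, Z) →L[ℂ] (X →L[ℂ] X),
        (∀ (f : C(K, ℂ)) (z : Z), w' (tensorCM f z) = u f ∘L v z) → w' = w := by
  have hbound := norm_dotTensor_le u hu_one hu_mul v hC hcomm
  have hdense := denseRange_tensorToCM (K := K) (Z := Z)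
  have hC0 := hC.1
  refine ⟨(dotTensor u v).extendOfNorm tensorToCM, fun f z => ?_,
    LinearMap.opNorm_extendOfNorm_le hdense (by positivity) hbound, fun w' hw' => ?_⟩
  · rw [← tensorToCM_tmul, LinearMap.extendOfNorm_eq hdense ⟨_, hbound⟩, dotTensor_tmul]
  · exact (LinearMap.extendOfNorm_unique hdense _ hbound w'
      (TensorProduct.ext' fun f z => by simp [hw'])).symm
end

section
/- Let A be a sectorial operator on a Banach space X with ω(A) = 0 having a uniformly bounded H^∞-calculus with constant C, i.e. ‖f(A)‖ ≤ C ‖f‖_{∞,θ} for all θ > 0 and f ∈ H^∞_0(Σ_θ). Then for every f ∈ H^∞_0(Σ_θ) (any θ > 0), ‖f(A)‖ ≤ C ‖f‖_{∞,0}, where ‖f‖_{∞,0} = sup_{t>0} |f(t)| is the supremum over the positive real half-line only. -/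
/-!
Let `S = sup_{t > 0} |f(t)|`. By the `H^∞_0` decay, `|f| ≤ e` on the sector outside an annulus
`δ ≤ |z| ≤ R`; on the compact radius range `[δ, R]` continuity of `f` along the positive axis
gives a thin sector `|arg z| < θ` on which `|f| < S + e`. Hence `‖T‖ ≤ C (S + e)` for every
`e > 0`.
-/

open Real

/-- The open sector `Σ_θ = {r e^{iφ} : r > 0, |φ| < θ}` in the complex plane. -/
def Sector (θ : ℝ) : Set ℂ := {z : ℂ | z ≠ 0 ∧ |Complex.arg z| < θ}

/-- `f ∈ H^∞_0(Σ_θ)`: `f` is analytic on `Σ_θ` and satisfies the decay estimate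
`|f(λ)| ≤ M min(|λ|^ε, |λ|^{-ε})` for some `ε, M > 0`. -/
def HinfZeroOn (f : ℂ → ℂ) (θ : ℝ) : Prop :=
  DifferentiableOn ℂ f (Sector θ) ∧
    ∃ ε > (0 : ℝ), ∃ M : ℝ, ∀ z ∈ Sector θ,
      ‖f z‖ ≤ M * min (‖z‖ ^ ε) (‖z‖ ^ (-ε))

open Filter Topology Set Complex

theorem sector_mono {θ θ' : ℝ} (h : θ ≤ θ') : Sector θ ⊆ Sector θ' :=
  fun _ hz => ⟨hz.1, hz.2.trans_le h⟩

theorem ofReal_mem_sector {t θ : ℝ} (ht : 0 < t) (hθ : 0 < θ) : (t : ℂ) ∈ Sector θ :=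
  ⟨ofReal_ne_zero.2 ht.ne', by simpa [arg_ofReal_of_nonneg ht.le] using hθ⟩

theorem sector_mem_nhds_ofReal {t θ : ℝ} (ht : 0 < t) (hθ : 0 < θ) :
    Sector θ ∈ 𝓝 (t : ℂ) := by
  have hmem := ofReal_mem_sector ht hθ
  have harg : ContinuousAt (fun z => |arg z|) (t : ℂ) :=
    continuous_abs.continuousAt.comp (continuousAt_arg (ofReal_mem_slitPlane.2 ht))
  exact (eventually_ne_nhds hmem.1).and (harg.eventually_lt continuousAt_const hmem.2)

namespace HinfZeroOn

variable {f : ℂ → ℂ} {θ : ℝ}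

theorem exists_norm_le (hf : HinfZeroOn f θ) :
    ∃ ε > (0 : ℝ), ∃ M ≥ (0 : ℝ), ∀ z ∈ Sector θ,
      ‖f z‖ ≤ M * ‖z‖ ^ ε ∧ ‖f z‖ ≤ M * ‖z‖ ^ (-ε) := by
  obtain ⟨-, ε, hε, M, hM⟩ := hf
  refine ⟨ε, hε, max M 0, le_max_right _ _, fun z hz => ?_⟩
  have hmin : ‖f z‖ ≤ max M 0 * min (‖z‖ ^ ε) (‖z‖ ^ (-ε)) :=
    (hM z hz).trans (mul_le_mul_of_nonneg_right (le_max_left _ _) (by positivity))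
  exact ⟨hmin.trans (by gcongr; exact min_le_left _ _),
    hmin.trans (by gcongr; exact min_le_right _ _)⟩

theorem bddAbove_norm_image (hf : HinfZeroOn f θ) :
    BddAbove ((fun z => ‖f z‖) '' Sector θ) := by
  obtain ⟨ε, hε, M, hM, hfM⟩ := hf.exists_norm_le
  refine ⟨M, ?_⟩
  rintro _ ⟨z, hz, rfl⟩
  rcases le_total ‖z‖ 1 with h | h
  · exact (hfM z hz).1.trans (mul_le_of_le_one_right hM (rpow_le_one (norm_nonneg z) h hε.le))
  · exact (hfM z hz).2.trans
      (mul_le_of_le_one_right hM (rpow_le_one_of_one_le_of_nonpos h (neg_nonpos.2 hε.le)))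

theorem exists_norm_le_of_norm_lt_or_le (hf : HinfZeroOn f θ) {e : ℝ} (he : 0 < e) :
    ∃ δ > (0 : ℝ), ∃ R : ℝ, ∀ z ∈ Sector θ, ‖z‖ < δ ∨ R ≤ ‖z‖ → ‖f z‖ ≤ e := by
  obtain ⟨ε, hε, M, -, hfM⟩ := hf.exists_norm_le
  have h0 : Tendsto (fun t : ℝ => M * t ^ ε) (𝓝 0) (𝓝 0) := by
    simpa [zero_rpow hε.ne'] using
      (continuousAt_rpow_const 0 ε (Or.inr hε.le)).tendsto.const_mul M
  have hinf : Tendsto (fun t : ℝ => M * t ^ (-ε)) atTop (𝓝 0) := by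
    simpa using (tendsto_rpow_neg_atTop hε).const_mul M
  obtain ⟨δ, hδ, hδe⟩ := Metric.eventually_nhds_iff.1 (h0.eventually (ge_mem_nhds he))
  obtain ⟨R, hRe⟩ := eventually_atTop.1 (hinf.eventually (ge_mem_nhds he))
  refine ⟨δ, hδ, R, fun z hz hzδR => ?_⟩
  rcases hzδR with h | h
  · exact (hfM z hz).1.trans (hδe (by simpa using h))
  · exact (hfM z hz).2.trans (hRe _ h)

end HinfZeroOn

theorem exists_pos_forall_lt_of_continuousAt_Icc {g : ℂ → ℝ} {a b s : ℝ}
    (hg : ∀ r ∈ Icc a b, ContinuousAt g r) (hs : ∀ r ∈ Icc a b, g r < s) :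
    ∃ η > (0 : ℝ), ∀ r ∈ Icc a b, ∀ φ : ℝ, |φ| < η → g (r * exp (φ * I)) < s := by
  have hev : ∀ᶠ φ : ℝ in 𝓝 0, ∀ r ∈ Icc a b, g (r * exp (φ * I)) < s := by
    refine isCompact_Icc.eventually_forall_of_forall_eventually fun r hr => ?_
    have hcont : ContinuousAt (fun p : ℝ × ℝ => g (p.2 * exp (p.1 * I))) (0, r) :=
      (hg r hr).comp_of_eq (by fun_prop) (by simp)
    exact hcont.eventually_lt continuousAt_const (by simpa using hs r hr)
  obtain ⟨η, hη, h⟩ := Metric.eventually_nhds_iff.1 hev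
  exact ⟨η, hη, fun r hr φ hφ => h (by simpa using hφ) r hr⟩

theorem HinfZeroOn.exists_forall_sector_norm_le {f : ℂ → ℂ} {θ₀ S e : ℝ}
    (hf : HinfZeroOn f θ₀) (hθ₀ : 0 < θ₀) (hS : ∀ t : ℝ, 0 < t → ‖f t‖ ≤ S) (he : 0 < e) :
    ∃ θ, 0 < θ ∧ θ ≤ θ₀ ∧ ∀ z ∈ Sector θ, ‖f z‖ ≤ S + e := by
  have hS₀ : 0 ≤ S := (norm_nonneg _).trans (hS 1 one_pos)
  obtain ⟨δ, hδ, R, hout⟩ := hf.exists_norm_le_of_norm_lt_or_le he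
  obtain ⟨η, hη, hin⟩ := exists_pos_forall_lt_of_continuousAt_Icc (g := fun z => ‖f z‖)
    (a := δ) (b := R) (s := S + e)
    (fun r hr => (hf.1.continuousOn.continuousAt
      (sector_mem_nhds_ofReal (hδ.trans_le hr.1) hθ₀)).norm)
    (fun r hr => (hS r (hδ.trans_le hr.1)).trans_lt (lt_add_of_pos_right S he))
  refine ⟨min θ₀ η, lt_min hθ₀ hη, min_le_left _ _, fun z hz => ?_⟩
  by_cases hzδR : ‖z‖ < δ ∨ R ≤ ‖z‖
  · exact (hout z (sector_mono (min_le_left _ _) hz) hzδR).trans (by linarith)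
  push Not at hzδR
  rw [← norm_mul_exp_arg_mul_I z]
  exact (hin ‖z‖ ⟨hzδR.1, hzδR.2.le⟩ (arg z) (hz.2.trans_le (min_le_right _ _))).le

theorem norm_le_of_uniformly_bounded_calculus_general {X : Type*} [NormedAddCommGroup X]
    [NormedSpace ℂ X] (C : ℝ) (hC : 0 ≤ C)
    (θ₀ : ℝ) (hθ₀ : 0 < θ₀)
    (f : ℂ → ℂ) (hf : HinfZeroOn f θ₀) (T : X →L[ℂ] X)
    (hT : ∀ θ : ℝ, 0 < θ → θ ≤ θ₀ →
      ‖T‖ ≤ C * sSup ((fun z : ℂ => ‖f z‖) '' Sector θ)) :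
    ‖T‖ ≤ C * sSup ((fun t : ℝ => ‖f (t : ℂ)‖) '' Set.Ioi (0 : ℝ)) := by
  set S := sSup ((fun t : ℝ => ‖f (t : ℂ)‖) '' Set.Ioi (0 : ℝ))
  have hbdd : BddAbove ((fun t : ℝ => ‖f (t : ℂ)‖) '' Set.Ioi (0 : ℝ)) :=
    hf.bddAbove_norm_image.mono (by
      rintro _ ⟨t, ht, rfl⟩
      exact ⟨t, ofReal_mem_sector ht hθ₀, rfl⟩)
  have hS : ∀ t : ℝ, 0 < t → ‖f t‖ ≤ S := fun t ht => le_csSup hbdd ⟨t, ht, rfl⟩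
  have hlim : Tendsto (fun e => C * (S + e)) (𝓝[>] 0) (𝓝 (C * S)) :=
    tendsto_nhdsWithin_of_tendsto_nhds
      ((by fun_prop : Continuous fun e : ℝ => C * (S + e)).tendsto' 0 _ (by simp))
  refine ge_of_tendsto hlim ?_
  filter_upwards [self_mem_nhdsWithin] with e (he : 0 < e)
  obtain ⟨θ, hθ, hθθ₀, hfθ⟩ := hf.exists_forall_sector_norm_le hθ₀ hS he
  have hS₀ : 0 ≤ S := (norm_nonneg _).trans (hS 1 one_pos)
  calc ‖T‖ ≤ C * sSup ((fun z : ℂ => ‖f z‖) '' Sector θ) := hT θ hθ hθθ₀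
    _ ≤ C * (S + e) := by
      refine mul_le_mul_of_nonneg_left (Real.sSup_le ?_ (by linarith)) hC
      rintro _ ⟨z, hz, rfl⟩
      exact hfθ z hz

/-- Let `A` be a sectorial operator with `ω(A) = 0` having a uniformly bounded
`H^∞`-calculus with constant `C`, so that for a fixed `f ∈ H^∞_0(Σ_{θ₀})` the operator
`T = f(A)` satisfies `‖T‖ ≤ C ‖f‖_{∞,θ}` for every `0 < θ ≤ θ₀` (the value of the
calculus not depending on the sector on which `f` is restricted). Then
`‖f(A)‖ ≤ C ‖f‖_{∞,0}`, the supremum of `|f|` over the positive real half-line only. -/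
theorem norm_le_of_uniformly_bounded_calculus {X : Type*} [NormedAddCommGroup X]
    [NormedSpace ℂ X] [CompleteSpace X] (C : ℝ) (hC : 0 ≤ C)
    (θ₀ : ℝ) (hθ₀ : 0 < θ₀) (hθ₀' : θ₀ < π)
    (f : ℂ → ℂ) (hf : HinfZeroOn f θ₀) (T : X →L[ℂ] X)
    (hT : ∀ θ : ℝ, 0 < θ → θ ≤ θ₀ →
      ‖T‖ ≤ C * sSup ((fun z : ℂ => ‖f z‖) '' Sector θ)) :
    ‖T‖ ≤ C * sSup ((fun t : ℝ => ‖f (t : ℂ)‖) '' Set.Ioi (0 : ℝ)) :=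
  norm_le_of_uniformly_bounded_calculus_general C hC θ₀ hθ₀ f hf T hT
end

section
/- Let A = [[1,1],[0,1]] on ℓ²_2. Then A does not have a uniformly bounded H^∞-calculus: there is no constant C such that ‖f(A)‖ ≤ C sup_{t>0}|f(t)| for all θ > 0 and all f ∈ H^∞_0(Σ_θ). More concretely, for f_s(λ) = h(λ)λ^{is} with h ∈ H^∞_0(Σ_{π/2}) fixed, h(1)=1, the ratio ‖f_s(A)‖ / ‖f_s‖_{∞,0} ≥ |h'(1) + is| / ‖h‖_{∞,0} → ∞ as s → ∞. -/
open Real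

/-- For the Jordan block `A = [[1,1],[0,1]]` on `ℓ²_2` and `f` analytic near `1`,
the functional calculus gives `f(A) = [[f(1), f'(1)],[0, f(1)]]`, as an operator
on the two-dimensional Hilbert space. -/
noncomputable def jordanCalc (f : ℂ → ℂ) :
    EuclideanSpace ℂ (Fin 2) →L[ℂ] EuclideanSpace ℂ (Fin 2) :=
  Matrix.toEuclideanCLM (𝕜 := ℂ) !![f 1, deriv f 1; 0, f 1]

/-!
Twisting a function `h ∈ H^∞_0` by the imaginary power `λ^{is}` leaves `|h|` unchanged on the
positive axis, where `|t^{is}| = 1`, but adds `i s h(1)` to the derivative at `1`, which is the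
off-diagonal entry of `f(A)`. Hence for `h(λ) = λ / (1 + λ)^2` the norm of `f_s(A)` grows
linearly in `s` while `sup_{t>0} |f_s(t)|` does not depend on `s`.
-/

open Complex Filter

theorem Matrix.norm_apply_le_norm_toEuclideanCLM {𝕜 n : Type*} [RCLike 𝕜] [Fintype n]
    [DecidableEq n] (A : Matrix n n 𝕜) (i j : n) :
    ‖A i j‖ ≤ ‖toEuclideanCLM (n := n) (𝕜 := 𝕜) A‖ := by
  set T := toEuclideanCLM (n := n) (𝕜 := 𝕜) A
  calc ‖A i j‖ = ‖T (EuclideanSpace.single j 1) i‖ := by simp [T]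
    _ ≤ ‖T (EuclideanSpace.single j 1)‖ := PiLp.norm_apply_le _ i
    _ ≤ ‖T‖ := by simpa using T.le_opNorm (EuclideanSpace.single j 1)

theorem norm_deriv_le_norm_jordanCalc (f : ℂ → ℂ) : ‖deriv f 1‖ ≤ ‖jordanCalc f‖ :=
  Matrix.norm_apply_le_norm_toEuclideanCLM !![f 1, deriv f 1; 0, f 1] 0 1

theorem sector_subset_slitPlane {θ : ℝ} (hθ : θ ≤ π) : Sector θ ⊆ slitPlane := by
  refine fun z ⟨hz, harg⟩ => mem_slitPlane_iff_arg.mpr ⟨fun hπ => ?_, hz⟩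
  rw [hπ, abs_of_pos pi_pos] at harg
  linarith

theorem norm_cpow_I_mul_ofReal (z : ℂ) (s : ℝ) (hz : z ≠ 0) :
    ‖z ^ (I * s)‖ = Real.exp (-(z.arg * s)) := by
  simp [norm_cpow_of_ne_zero hz, Real.exp_neg]

theorem norm_cpow_I_mul_ofReal_le {θ : ℝ} {z : ℂ} (hz : z ∈ Sector θ) (s : ℝ) :
    ‖z ^ (I * s)‖ ≤ Real.exp (θ * |s|) := by
  rw [norm_cpow_I_mul_ofReal z s hz.1, Real.exp_le_exp]
  calc -(z.arg * s) ≤ |z.arg| * |s| := by rw [← abs_mul]; exact neg_le_abs _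
    _ ≤ θ * |s| := by gcongr; exact hz.2.le

theorem norm_ofReal_cpow_I_mul {t : ℝ} (ht : 0 < t) (s : ℝ) : ‖(t : ℂ) ^ (I * s)‖ = 1 := by
  simp [norm_cpow_eq_rpow_re_of_pos ht]

noncomputable def mulImagPow (h : ℂ → ℂ) (s : ℝ) : ℂ → ℂ := fun z => h z * z ^ (I * s)

theorem HinfZeroOn.mulImagPow {h : ℂ → ℂ} {θ : ℝ} (hh : HinfZeroOn h θ) (hθ : θ ≤ π) (s : ℝ) :
    HinfZeroOn (mulImagPow h s) θ := by
  obtain ⟨hdiff, ε, hε, M, hM⟩ := hh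
  refine ⟨fun z hz => ?_, ε, hε, M * Real.exp (θ * |s|), fun z hz => ?_⟩
  · have hpow : DifferentiableAt ℂ (fun w : ℂ => w ^ (I * s)) z :=
      differentiableAt_id.cpow_const (sector_subset_slitPlane hθ hz)
    exact (hdiff z hz).mul hpow.differentiableWithinAt
  · calc ‖_root_.mulImagPow h s z‖ = ‖h z‖ * ‖z ^ (I * s)‖ := norm_mul _ _
      _ ≤ M * min (‖z‖ ^ ε) (‖z‖ ^ (-ε)) * Real.exp (θ * |s|) :=
        mul_le_mul (hM z hz) (norm_cpow_I_mul_ofReal_le hz s) (norm_nonneg _)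
          ((norm_nonneg _).trans (hM z hz))
      _ = M * Real.exp (θ * |s|) * min (‖z‖ ^ ε) (‖z‖ ^ (-ε)) := by ring

theorem image_norm_mulImagPow_Ioi (h : ℂ → ℂ) (s : ℝ) :
    (fun t : ℝ => ‖mulImagPow h s t‖) '' Set.Ioi 0 = (fun t : ℝ => ‖h t‖) '' Set.Ioi 0 :=
  Set.image_congr fun t ht => by simp [mulImagPow, norm_ofReal_cpow_I_mul ht]

theorem deriv_mulImagPow_one {h : ℂ → ℂ} (hh : DifferentiableAt ℂ h 1) (s : ℝ) :
    deriv (mulImagPow h s) 1 = deriv h 1 + I * s * h 1 := by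
  have hpow : HasDerivAt (fun w : ℂ => w ^ (I * s)) (I * s) 1 := by
    simpa using (hasStrictDerivAt_cpow_const (c := I * s) one_mem_slitPlane).hasDerivAt
  unfold mulImagPow
  rw [(hh.hasDerivAt.fun_mul hpow).deriv, one_cpow, mul_one, mul_comm (h 1)]

theorem tendsto_norm_jordanCalc_mulImagPow {h : ℂ → ℂ} (hh : DifferentiableAt ℂ h 1)
    (h1 : h 1 ≠ 0) :
    Tendsto (fun s : ℝ => ‖jordanCalc (mulImagPow h s)‖) atTop atTop := by
  have hlin : Tendsto (fun s : ℝ => s * ‖h 1‖ - ‖deriv h 1‖) atTop atTop :=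
    tendsto_atTop_add_const_right _ _ (tendsto_id.atTop_mul_const (norm_pos_iff.mpr h1))
  refine tendsto_atTop_mono' _ ?_ hlin
  filter_upwards [eventually_ge_atTop 0] with s hs
  calc s * ‖h 1‖ - ‖deriv h 1‖ = ‖I * s * h 1‖ - ‖deriv h 1‖ := by simp [abs_of_nonneg hs]
    _ ≤ ‖deriv h 1 + I * s * h 1‖ := by
      have := norm_sub_le (deriv h 1 + I * s * h 1) (deriv h 1)
      rw [add_sub_cancel_left] at this
      linarith
    _ = ‖deriv (mulImagPow h s) 1‖ := by rw [deriv_mulImagPow_one hh]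
    _ ≤ ‖jordanCalc (mulImagPow h s)‖ := norm_deriv_le_norm_jordanCalc _

theorem re_pos_of_mem_sector_pi_div_two {z : ℂ} (hz : z ∈ Sector (π / 2)) : 0 < z.re :=
  (abs_arg_lt_pi_div_two_iff.mp hz.2).resolve_right hz.1

theorem norm_div_one_add_sq_le {z : ℂ} (hz : 0 ≤ z.re) :
    ‖z / (1 + z) ^ 2‖ ≤ min ‖z‖ ‖z‖⁻¹ := by
  have hsq : ‖1 + z‖ ^ 2 = 1 + 2 * z.re + ‖z‖ ^ 2 := by
    rw [Complex.sq_norm, Complex.sq_norm, normSq_apply, normSq_apply]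
    simp only [add_re, one_re, add_im, one_im]
    ring
  rcases (norm_nonneg z).eq_or_lt with h0 | hpos
  · simp [norm_eq_zero.mp h0.symm]
  have hden : 0 < ‖1 + z‖ ^ 2 := by nlinarith
  rw [norm_div, norm_pow, le_min_iff, div_le_iff₀ hden, div_le_iff₀ hden, hsq,
    inv_mul_eq_div, le_div_iff₀ hpos]
  constructor <;> nlinarith

theorem hinfZeroOn_div_one_add_sq : HinfZeroOn (fun z => z / (1 + z) ^ 2) (π / 2) := by
  refine ⟨fun z hz => ?_, 1, one_pos, 1, fun z hz => ?_⟩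
  · have h1z : 1 + z ≠ 0 := fun h => by
      have hre := congrArg re h
      simp only [add_re, one_re, zero_re] at hre
      linarith [re_pos_of_mem_sector_pi_div_two hz]
    have : DifferentiableAt ℂ (fun z : ℂ => z / (1 + z) ^ 2) z := by
      fun_prop (disch := exact pow_ne_zero 2 h1z)
    exact this.differentiableWithinAt
  · simpa [Real.rpow_neg_one] using norm_div_one_add_sq_le (re_pos_of_mem_sector_pi_div_two hz).le

/-- The operator `A = [[1,1],[0,1]]` on `ℓ²_2` does not have a uniformly bounded
`H^∞`-calculus: there is no constant `C` such that `‖f(A)‖ ≤ C sup_{t>0} |f(t)|`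
for all `θ > 0` and all `f ∈ H^∞_0(Σ_θ)`. -/
theorem jordan_block_no_uniformly_bounded_calculus :
    ¬ ∃ C : ℝ, ∀ θ : ℝ, 0 < θ → θ < π → ∀ f : ℂ → ℂ, HinfZeroOn f θ →
      ‖jordanCalc f‖ ≤ C * sSup ((fun t : ℝ => ‖f (t : ℂ)‖) '' Set.Ioi (0 : ℝ)) := by
  rintro ⟨C, hC⟩
  set h : ℂ → ℂ := fun z => z / (1 + z) ^ 2
  have hθ : π / 2 < π := by linarith [pi_pos]
  -- The bound does not depend on `s`, whatever value `sSup` takes.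
  have hbound (s : ℝ) :
      ‖jordanCalc (mulImagPow h s)‖ ≤ C * sSup ((fun t : ℝ => ‖h t‖) '' Set.Ioi 0) := by
    simpa only [image_norm_mulImagPow_Ioi] using
      hC _ (by positivity) hθ _ (hinfZeroOn_div_one_add_sq.mulImagPow hθ.le s)
  have hdiff : DifferentiableAt ℂ h 1 := by fun_prop (disch := norm_num)
  have h1 : h 1 ≠ 0 := by norm_num [h]
  obtain ⟨s, hs⟩ := ((tendsto_norm_jordanCalc_mulImagPow hdiff h1).eventually_gt_atTop
    (C * sSup ((fun t : ℝ => ‖h t‖) '' Set.Ioi 0))).exists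
  exact (hbound s).not_gt hs
end
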